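/- arXiv:math/0510462 — 6 statements merged into one kernel-verified Lean document; each statement's English description precedes it below -/
import Mathlib

section
/- Let n ≥ 1 and let f : ℝⁿ → ℝ be symmetric and convex. Then the induced spectral function F on the real vector space of n×n real symmetric matrices, defined by F(A) = f(λ(A)), is convex: for all real symmetric n×n matrices A, B and all t ∈ [0,1], F(tA + (1−t)B) ≤ t F(A) + (1−t) F(B). -/
/-!
Diagonalise `C = t • A + (1 - t) • B` by an orthogonal `U`. Then `λ(C)` is the diagonal of
`Uᵀ C U`, which is linear in `C`, so convexity of `f` bounds `f (λ C)` by the same combination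
of `f (diag (Uᵀ A U))` and `f (diag (Uᵀ B U))`. If `A = V (diagonal λ(A)) Vᵀ` and `W = Uᵀ V`,
then `diag (Uᵀ A U)` is `λ(A)` multiplied by the matrix of the squared entries of `W`, which is
doubly stochastic. By Birkhoff's theorem such a product is a convex combination of permutations
of `λ(A)`, on which a symmetric convex `f` is at most `f (λ A)`.
-/

open Matrix

variable {ι : Type*} [Fintype ι] [DecidableEq ι]

theorem mulVec_mem_convexHull_of_mem_doublyStochastic {𝕜 : Type*} [Field 𝕜] [LinearOrder 𝕜]
    [IsStrictOrderedRing 𝕜] {S : Matrix ι ι 𝕜} (hS : S ∈ doublyStochastic 𝕜 ι) (x : ι → 𝕜) :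
    S *ᵥ x ∈ convexHull 𝕜 {x ∘ σ | σ : Equiv.Perm ι} := by
  have hS' : S ∈ convexHull 𝕜 {σ.permMatrix 𝕜 | σ : Equiv.Perm ι} := by
    rwa [← doublyStochastic_eq_convexHull_permMatrix]
  have hmap := (LinearMap.applyₗ (R := 𝕜) x ∘ₗ
    (toLin' : Matrix ι ι 𝕜 ≃ₗ[𝕜] _).toLinearMap).image_convexHull
      {σ.permMatrix 𝕜 | σ : Equiv.Perm ι}
  have hx := hmap ▸ Set.mem_image_of_mem _ hS'
  simpa [Set.image, permMatrix_mulVec] using hx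

theorem ConvexOn.map_mulVec_le_of_mem_doublyStochastic {𝕜 β : Type*} [Field 𝕜] [LinearOrder 𝕜]
    [IsStrictOrderedRing 𝕜] [AddCommGroup β] [LinearOrder β] [IsOrderedAddMonoid β]
    [Module 𝕜 β] [IsStrictOrderedModule 𝕜 β] {f : (ι → 𝕜) → β} (hf : ConvexOn 𝕜 Set.univ f)
    (hsym : ∀ (σ : Equiv.Perm ι) x, f (x ∘ σ) = f x)
    {S : Matrix ι ι 𝕜} (hS : S ∈ doublyStochastic 𝕜 ι) (x : ι → 𝕜) : f (S *ᵥ x) ≤ f x := by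
  obtain ⟨_, ⟨σ, rfl⟩, hle⟩ := hf.exists_ge_of_mem_convexHull (Set.subset_univ _)
    (mulVec_mem_convexHull_of_mem_doublyStochastic hS x)
  exact hle.trans_eq (hsym σ x)

namespace Matrix

theorem diag_mul_diagonal_mul_transpose {R : Type*} [CommSemiring R] (W : Matrix ι ι R)
    (d : ι → R) : (W * diagonal d * Wᵀ).diag = of (fun i j => W i j ^ 2) *ᵥ d := by
  ext i
  simp only [diag_apply, mul_apply, diagonal_apply, mul_ite, mul_zero, Finset.sum_ite_eq',
    Finset.mem_univ, if_true, transpose_apply, mulVec, dotProduct, of_apply]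
  exact Finset.sum_congr rfl fun j _ => by ring

theorem sq_entries_mem_doublyStochastic {W : Matrix ι ι ℝ} (hW : W ∈ orthogonalGroup ι ℝ) :
    of (fun i j => W i j ^ 2) ∈ doublyStochastic ℝ ι := by
  refine mem_doublyStochastic_iff_sum.2 ⟨fun i j => sq_nonneg _, fun i => ?_, fun j => ?_⟩
  · simpa [mul_apply, sq] using congrFun₂ ((mem_orthogonalGroup_iff ι ℝ).1 hW) i i
  · simpa [mul_apply, sq] using congrFun₂ ((mem_orthogonalGroup_iff' ι ℝ).1 hW) j j

namespace IsHermitian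

variable {A : Matrix ι ι ℝ} (hA : A.IsHermitian)

theorem eq_eigenvectorUnitary_mul_diagonal_mul_transpose :
    A = hA.eigenvectorUnitary * diagonal hA.eigenvalues *
      (hA.eigenvectorUnitary : Matrix ι ι ℝ)ᵀ := by
  simpa [Unitary.conjStarAlgAut_apply, star_eq_conjTranspose] using hA.spectral_theorem

theorem eigenvalues_eq_diag_conj_eigenvectorUnitary :
    hA.eigenvalues =
      ((hA.eigenvectorUnitary : Matrix ι ι ℝ)ᵀ * A * hA.eigenvectorUnitary).diag := by
  simpa [Unitary.conjStarAlgAut_star_apply, star_eq_conjTranspose] using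
    (congrArg diag hA.conjStarAlgAut_star_eigenvectorUnitary).symm

theorem exists_mem_doublyStochastic_diag_conj_eq_mulVec {U : Matrix ι ι ℝ}
    (hU : U ∈ orthogonalGroup ι ℝ) :
    ∃ S ∈ doublyStochastic ℝ ι, (Uᵀ * A * U).diag = S *ᵥ hA.eigenvalues := by
  have hW : Uᵀ * hA.eigenvectorUnitary ∈ orthogonalGroup ι ℝ :=
    Submonoid.mul_mem _ (Unitary.star_mem hU) hA.eigenvectorUnitary.2
  refine ⟨_, sq_entries_mem_doublyStochastic hW, ?_⟩
  rw [← diag_mul_diagonal_mul_transpose]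
  conv_lhs => rw [hA.eq_eigenvectorUnitary_mul_diagonal_mul_transpose]
  simp only [transpose_mul, transpose_transpose, Matrix.mul_assoc]

end IsHermitian

end Matrix

theorem ConvexOn.map_diag_conj_le_map_eigenvalues {f : (ι → ℝ) → ℝ}
    (hf : ConvexOn ℝ Set.univ f) (hsym : ∀ (σ : Equiv.Perm ι) x, f (x ∘ σ) = f x)
    {A : Matrix ι ι ℝ} (hA : A.IsHermitian) {U : Matrix ι ι ℝ} (hU : U ∈ orthogonalGroup ι ℝ) :
    f (Uᵀ * A * U).diag ≤ f hA.eigenvalues := by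
  obtain ⟨S, hS, hdiag⟩ := hA.exists_mem_doublyStochastic_diag_conj_eq_mulVec hU
  exact hdiag ▸ hf.map_mulVec_le_of_mem_doublyStochastic hsym hS _

theorem spectral_function_convex_general (n : ℕ) (f : (Fin n → ℝ) → ℝ)
    (hsym : ∀ (σ : Equiv.Perm (Fin n)) (x : Fin n → ℝ), f (x ∘ σ) = f x)
    (hconv : ConvexOn ℝ Set.univ f)
    (A B : Matrix (Fin n) (Fin n) ℝ)
    (hA : A.IsHermitian) (hB : B.IsHermitian)
    (t : ℝ) (ht0 : 0 ≤ t) (ht1 : t ≤ 1)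
    (hC : (t • A + (1 - t) • B).IsHermitian) :
    f hC.eigenvalues ≤ t * f hA.eigenvalues + (1 - t) * f hB.eigenvalues := by
  set U : Matrix (Fin n) (Fin n) ℝ := (hC.eigenvectorUnitary : Matrix (Fin n) (Fin n) ℝ)
  have hU : U ∈ orthogonalGroup (Fin n) ℝ := hC.eigenvectorUnitary.2
  have hdiag : hC.eigenvalues = t • (Uᵀ * A * U).diag + (1 - t) • (Uᵀ * B * U).diag := by
    rw [hC.eigenvalues_eq_diag_conj_eigenvectorUnitary]
    simp only [Matrix.mul_add, Matrix.add_mul, Matrix.mul_smul, Matrix.smul_mul, diag_add,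
      diag_smul, U]
  calc f hC.eigenvalues
      ≤ t • f (Uᵀ * A * U).diag + (1 - t) • f (Uᵀ * B * U).diag :=
        hdiag ▸ hconv.2 (Set.mem_univ _) (Set.mem_univ _) ht0 (sub_nonneg.2 ht1) (by ring)
    _ ≤ t * f hA.eigenvalues + (1 - t) * f hB.eigenvalues :=
        add_le_add
          (mul_le_mul_of_nonneg_left (hconv.map_diag_conj_le_map_eigenvalues hsym hA hU) ht0)
          (mul_le_mul_of_nonneg_left (hconv.map_diag_conj_le_map_eigenvalues hsym hB hU)
            (sub_nonneg.2 ht1))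

/-- If `f : ℝⁿ → ℝ` (n ≥ 1) is symmetric and convex, then the induced
spectral function `F(A) = f(λ(A))` on real symmetric `n × n` matrices is convex. -/
theorem spectral_function_convex (n : ℕ) (hn : 1 ≤ n) (f : (Fin n → ℝ) → ℝ)
    (hsym : ∀ (σ : Equiv.Perm (Fin n)) (x : Fin n → ℝ), f (x ∘ σ) = f x)
    (hconv : ConvexOn ℝ Set.univ f)
    (A B : Matrix (Fin n) (Fin n) ℝ)
    (hA : A.IsHermitian) (hB : B.IsHermitian)
    (t : ℝ) (ht0 : 0 ≤ t) (ht1 : t ≤ 1)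
    (hC : (t • A + (1 - t) • B).IsHermitian) :
    f hC.eigenvalues ≤ t * f hA.eigenvalues + (1 - t) * f hB.eigenvalues :=
  spectral_function_convex_general n f hsym hconv A B hA hB t ht0 ht1 hC
end

section
/- Let n ≥ 1 and let f : ℝⁿ → ℝ be symmetric and concave. Then the induced spectral function F on the real vector space of n×n real symmetric matrices, defined by F(A) = f(λ(A)), is concave: for all real symmetric n×n matrices A, B and all t ∈ [0,1], F(tA + (1−t)B) ≥ t F(A) + (1−t) F(B). -/
/-!
Let `U` be an orthogonal matrix diagonalising `C = t • A + (1 - t) • B`, so that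
`λ(C) = diag (Uᵀ C U) = t • diag (Uᵀ A U) + (1 - t) • diag (Uᵀ B U)`.
For every orthogonal `V`, `diag (V Λ Vᵀ) = (V ⊙ V) λ` with `V ⊙ V` doubly stochastic, hence by
Birkhoff's theorem a convex combination of permutations of `λ`; symmetry and concavity of `f` then
give `f λ(A) ≤ f (diag (Uᵀ A U))` (Schur's inequality), and likewise for `B`. One more application
of concavity finishes the proof.
-/
open Matrix Finset

variable {ι : Type*} [Fintype ι] [DecidableEq ι]

theorem ConcaveOn.le_apply_mulVec_of_mem_doublyStochastic {f : (ι → ℝ) → ℝ}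
    (hconc : ConcaveOn ℝ Set.univ f) (hsym : ∀ (σ : Equiv.Perm ι) (x : ι → ℝ), f (x ∘ σ) = f x)
    {S : Matrix ι ι ℝ} (hS : S ∈ doublyStochastic ℝ ι) (x : ι → ℝ) :
    f x ≤ f (S *ᵥ x) := by
  obtain ⟨w, hw0, hw1, rfl⟩ := exists_eq_sum_perm_of_mem_doublyStochastic hS
  simp only [sum_mulVec, smul_mulVec, permMatrix_mulVec]
  calc f x = ∑ σ, w σ • f (x ∘ σ) := by simp only [hsym, ← sum_smul, hw1, one_smul]
    _ ≤ f (∑ σ, w σ • (x ∘ σ)) :=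
      hconc.le_map_sum (fun σ _ ↦ hw0 σ) hw1 (fun σ _ ↦ Set.mem_univ _)

namespace Matrix

theorem hadamard_self_mem_doublyStochastic_of_mem_unitaryGroup {V : Matrix ι ι ℝ}
    (hV : V ∈ unitaryGroup ι ℝ) : V ⊙ V ∈ doublyStochastic ℝ ι := by
  refine mem_doublyStochastic_iff_sum.mpr ⟨fun i j ↦ mul_self_nonneg _, fun i ↦ ?_, fun j ↦ ?_⟩
  · simpa [mul_apply] using congr_fun₂ (mem_unitaryGroup_iff.mp hV) i i
  · simpa [mul_apply] using congr_fun₂ (mem_unitaryGroup_iff'.mp hV) j j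

theorem diag_mul_diagonal_mul_star (V : Matrix ι ι ℝ) (d : ι → ℝ) :
    (V * diagonal d * star V).diag = (V ⊙ V) *ᵥ d := by
  ext i
  rw [diag_apply, mul_apply]
  simp only [mul_diagonal, star_apply, star_trivial, mulVec, dotProduct,
    hadamard_apply, mul_right_comm]

theorem IsHermitian.diag_star_eigenvectorUnitary_mul_mul {𝕜 : Type*} [RCLike 𝕜] {A : Matrix ι ι 𝕜}
    (hA : A.IsHermitian) :
    (star (hA.eigenvectorUnitary : Matrix ι ι 𝕜) * A * hA.eigenvectorUnitary).diag =
      RCLike.ofReal ∘ hA.eigenvalues := by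
  rw [← Unitary.conjStarAlgAut_star_apply (S := 𝕜), hA.conjStarAlgAut_star_eigenvectorUnitary,
    diag_diagonal]

theorem IsHermitian.le_apply_diag_star_mul_mul {f : (ι → ℝ) → ℝ}
    (hconc : ConcaveOn ℝ Set.univ f) (hsym : ∀ (σ : Equiv.Perm ι) (x : ι → ℝ), f (x ∘ σ) = f x)
    {A : Matrix ι ι ℝ} (hA : A.IsHermitian) {U : Matrix ι ι ℝ} (hU : U ∈ unitaryGroup ι ℝ) :
    f hA.eigenvalues ≤ f (star U * A * U).diag := by
  set V := star U * (hA.eigenvectorUnitary : Matrix ι ι ℝ)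
  have hV : V ∈ unitaryGroup ι ℝ := mul_mem (Unitary.star_mem hU) hA.eigenvectorUnitary.2
  have hconj : star U * A * U = V * diagonal hA.eigenvalues * star V := by
    conv_lhs => rw [hA.spectral_theorem, Unitary.conjStarAlgAut_apply]
    simp [V, Matrix.mul_assoc]
  rw [hconj, diag_mul_diagonal_mul_star]
  exact hconc.le_apply_mulVec_of_mem_doublyStochastic hsym
    (hadamard_self_mem_doublyStochastic_of_mem_unitaryGroup hV) _

end Matrix

theorem spectral_function_concave_general (n : ℕ) (f : (Fin n → ℝ) → ℝ)
    (hsym : ∀ (σ : Equiv.Perm (Fin n)) (x : Fin n → ℝ), f (x ∘ σ) = f x)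
    (hconc : ConcaveOn ℝ Set.univ f)
    (A B : Matrix (Fin n) (Fin n) ℝ)
    (hA : A.IsHermitian) (hB : B.IsHermitian)
    (t : ℝ) (ht0 : 0 ≤ t) (ht1 : t ≤ 1)
    (hC : (t • A + (1 - t) • B).IsHermitian) :
    t * f hA.eigenvalues + (1 - t) * f hB.eigenvalues ≤ f hC.eigenvalues := by
  set U : Matrix (Fin n) (Fin n) ℝ := ↑hC.eigenvectorUnitary
  have hU : U ∈ unitaryGroup (Fin n) ℝ := hC.eigenvectorUnitary.2
  have hdiag : hC.eigenvalues = t • (star U * A * U).diag + (1 - t) • (star U * B * U).diag := by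
    have hdiagC := hC.diag_star_eigenvectorUnitary_mul_mul
    simp only [Matrix.mul_add, Matrix.add_mul, Matrix.mul_smul, Matrix.smul_mul, diag_add,
      diag_smul] at hdiagC
    exact hdiagC.symm
  rw [hdiag]
  calc t * f hA.eigenvalues + (1 - t) * f hB.eigenvalues
      ≤ t * f (star U * A * U).diag + (1 - t) * f (star U * B * U).diag :=
        add_le_add (mul_le_mul_of_nonneg_left (hA.le_apply_diag_star_mul_mul hconc hsym hU) ht0)
          (mul_le_mul_of_nonneg_left (hB.le_apply_diag_star_mul_mul hconc hsym hU)
            (sub_nonneg.2 ht1))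
    _ ≤ f (t • (star U * A * U).diag + (1 - t) • (star U * B * U).diag) :=
        hconc.2 (Set.mem_univ _) (Set.mem_univ _) ht0 (by linarith) (by ring)

/-- If `f : ℝⁿ → ℝ` (n ≥ 1) is symmetric and concave, then the induced
spectral function `F(A) = f(λ(A))` on real symmetric `n × n` matrices is concave. -/
theorem spectral_function_concave (n : ℕ) (hn : 1 ≤ n) (f : (Fin n → ℝ) → ℝ)
    (hsym : ∀ (σ : Equiv.Perm (Fin n)) (x : Fin n → ℝ), f (x ∘ σ) = f x)
    (hconc : ConcaveOn ℝ Set.univ f)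
    (A B : Matrix (Fin n) (Fin n) ℝ)
    (hA : A.IsHermitian) (hB : B.IsHermitian)
    (t : ℝ) (ht0 : 0 ≤ t) (ht1 : t ≤ 1)
    (hC : (t • A + (1 - t) • B).IsHermitian) :
    t * f hA.eigenvalues + (1 - t) * f hB.eigenvalues ≤ f hC.eigenvalues :=
  spectral_function_concave_general n f hsym hconc A B hA hB t ht0 ht1 hC
end

section
/- Let f : ℝⁿ → ℝ be symmetric, differentiable, and convex. Then for every λ ∈ ℝⁿ and all indices i ≠ j, (∂f/∂λᵢ(λ) − ∂f/∂λⱼ(λ)) · (λᵢ − λⱼ) ≥ 0. -/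
/-- If `f : ℝⁿ → ℝ` is symmetric, differentiable and convex, then for all
`λ ∈ ℝⁿ` and all `i ≠ j`, `(∂f/∂λᵢ(λ) − ∂f/∂λⱼ(λ)) · (λᵢ − λⱼ) ≥ 0`. -/
theorem convex_symmetric_divided_difference (n : ℕ) (f : (Fin n → ℝ) → ℝ)
    (hsym : ∀ (σ : Equiv.Perm (Fin n)) (x : Fin n → ℝ), f (x ∘ σ) = f x)
    (hdiff : Differentiable ℝ f)
    (hconv : ConvexOn ℝ Set.univ f)
    (lam : Fin n → ℝ) (i j : Fin n) (hij : i ≠ j) :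
    0 ≤ (fderiv ℝ f lam (Pi.single i 1) - fderiv ℝ f lam (Pi.single j 1)) *
      (lam i - lam j) := by
  set μ : Fin n → ℝ := lam ∘ Equiv.swap i j with hμ
  set v : Fin n → ℝ := μ - lam with hv
  -- v as combination of basis vectors
  have hvdecomp : v = (lam j - lam i) • (Pi.single i 1 : Fin n → ℝ)
      + (lam i - lam j) • (Pi.single j 1 : Fin n → ℝ) := by
    funext k
    simp only [hv, hμ, Pi.sub_apply, Pi.add_apply, Pi.smul_apply, Function.comp_apply,
      Pi.single_apply, smul_eq_mul]
    rcases eq_or_ne k i with rfl | hki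
    · rw [Equiv.swap_apply_left, if_pos rfl, if_neg hij]
      ring
    · rcases eq_or_ne k j with rfl | hkj
      · rw [Equiv.swap_apply_right, if_neg hki, if_pos rfl]
        ring
      · rw [Equiv.swap_apply_of_ne_of_ne hki hkj, if_neg hki, if_neg hkj]
        ring
  -- the affine path
  set A : ℝ →ᵃ[ℝ] (Fin n → ℝ) := AffineMap.lineMap lam μ with hA
  have hA0 : A 0 = lam := AffineMap.lineMap_apply_zero lam μ
  have hA1 : A 1 = μ := AffineMap.lineMap_apply_one lam μ
  set g : ℝ → ℝ := f ∘ A with hg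
  have hgconv : ConvexOn ℝ Set.univ g := by
    have := hconv.comp_affineMap A
    simpa using this
  have hderiv : HasDerivAt g (fderiv ℝ f lam v) 0 := by
    have hc : HasDerivAt (fun t : ℝ => t • v + lam) v 0 := by
      simpa using ((hasDerivAt_id (0:ℝ)).smul_const v).add_const lam
    have hc' : HasDerivAt (fun t : ℝ => A t) v 0 := by
      have heq : (fun t : ℝ => A t) = fun t : ℝ => t • v + lam := by
        funext t
        simp only [hA, AffineMap.lineMap_apply_module, hv]
        rw [smul_sub, sub_smul, one_smul]
        abel
      rw [heq]; exact hc
    have hf : HasFDerivAt f (fderiv ℝ f lam) ((fun t : ℝ => A t) 0) := by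
      simp only [hA0]
      exact (hdiff lam).hasFDerivAt
    exact hf.comp_hasDerivAt 0 hc'
  have hslope : g 1 - g 0 = 0 := by
    simp only [hg, Function.comp_apply, hA1, hA0, hμ]
    rw [hsym (Equiv.swap i j) lam]
    ring
  have hle : fderiv ℝ f lam v ≤ slope g 0 1 :=
    hgconv.le_slope_of_hasDerivAt (Set.mem_univ 0) (Set.mem_univ 1) one_pos hderiv
  have hslope' : slope g 0 1 = 0 := by
    rw [slope_def_field]
    rw [show g 1 - g 0 = 0 from hslope]
    norm_num
  rw [hslope'] at hle
  have hexp : fderiv ℝ f lam v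
      = (lam j - lam i) * fderiv ℝ f lam (Pi.single i 1)
      + (lam i - lam j) * fderiv ℝ f lam (Pi.single j 1) := by
    rw [hvdecomp, map_add, map_smul, map_smul]
    simp [smul_eq_mul]
  rw [hexp] at hle
  nlinarith [hle]
end

section
/- Let f : ℝⁿ → ℝ be symmetric, differentiable, and concave. Then for every λ ∈ ℝⁿ and all indices i ≠ j, (∂f/∂λᵢ(λ) − ∂f/∂λⱼ(λ)) · (λᵢ − λⱼ) ≤ 0. -/
/-!
Concavity gives the supergradient inequality `f μ - f λ ≤ Df(λ)(μ - λ)`. Take for `μ` the vector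
`λ` with coordinates `i` and `j` exchanged: symmetry makes the left side vanish, and the right side
is `(λⱼ - λᵢ)(∂ᵢf(λ) - ∂ⱼf(λ))`.
-/

open Set

theorem ConcaveOn.sub_le_of_hasFDerivAt {E : Type*} [NormedAddCommGroup E] [NormedSpace ℝ E]
    {f : E → ℝ} {f' : E →L[ℝ] ℝ} {s : Set E} {x y : E} (hf : ConcaveOn ℝ s f)
    (hx : x ∈ s) (hy : y ∈ s) (hf' : HasFDerivAt f f' x) :
    f y - f x ≤ f' (y - x) := by
  let ℓ : ℝ →ᵃ[ℝ] E := AffineMap.lineMap x y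
  have hline : ConcaveOn ℝ (ℓ ⁻¹' s) (f ∘ ℓ) := hf.comp_affineMap ℓ
  have hderiv : HasDerivAt (f ∘ ℓ) (f' (y - x)) 0 := by
    refine HasFDerivAt.comp_hasDerivAt (0 : ℝ) ?_ AffineMap.hasDerivAt_lineMap
    simpa [ℓ] using hf'
  simpa [ℓ, slope_def_field] using
    hline.slope_le_of_hasDerivAt (by simpa [ℓ]) (by simpa [ℓ]) zero_lt_one hderiv

theorem Function.comp_swap_sub_self {ι R : Type*} [DecidableEq ι] [Ring R] (v : ι → R) (i j : ι) :
    v ∘ Equiv.swap i j - v = (v j - v i) • (Pi.single i 1 - Pi.single j 1) := by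
  ext k
  rcases eq_or_ne k i with rfl | hki
  · rcases eq_or_ne k j with rfl | hkj
    · simp
    · simp [hkj]
  · rcases eq_or_ne k j with rfl | hkj
    · simp [hki]
    · simp [Equiv.swap_apply_of_ne_of_ne hki hkj, hki, hkj]

theorem concave_symmetric_divided_difference_general (n : ℕ) (f : (Fin n → ℝ) → ℝ)
    (hsym : ∀ (σ : Equiv.Perm (Fin n)) (x : Fin n → ℝ), f (x ∘ σ) = f x)
    (hdiff : Differentiable ℝ f)
    (hconc : ConcaveOn ℝ Set.univ f)
    (lam : Fin n → ℝ) (i j : Fin n) :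
    (fderiv ℝ f lam (Pi.single i 1) - fderiv ℝ f lam (Pi.single j 1)) *
      (lam i - lam j) ≤ 0 := by
  have hsuper := hconc.sub_le_of_hasFDerivAt (mem_univ lam) (mem_univ (lam ∘ Equiv.swap i j))
    (hdiff lam).hasFDerivAt
  rw [hsym, sub_self, Function.comp_swap_sub_self, map_smul, map_sub, smul_eq_mul] at hsuper
  linear_combination hsuper

/-- If `f : ℝⁿ → ℝ` is symmetric, differentiable and concave, then for all
`λ ∈ ℝⁿ` and all `i ≠ j`, `(∂f/∂λᵢ(λ) − ∂f/∂λⱼ(λ)) · (λᵢ − λⱼ) ≤ 0`. -/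
theorem concave_symmetric_divided_difference (n : ℕ) (f : (Fin n → ℝ) → ℝ)
    (hsym : ∀ (σ : Equiv.Perm (Fin n)) (x : Fin n → ℝ), f (x ∘ σ) = f x)
    (hdiff : Differentiable ℝ f)
    (hconc : ConcaveOn ℝ Set.univ f)
    (lam : Fin n → ℝ) (i j : Fin n) (hij : i ≠ j) :
    (fderiv ℝ f lam (Pi.single i 1) - fderiv ℝ f lam (Pi.single j 1)) *
      (lam i - lam j) ≤ 0 :=
  concave_symmetric_divided_difference_general n f hsym hdiff hconc lam i j
end

section
/- Let m ∈ ℝ, m ≠ 0, and let f, 𝔣 : Γ₊ → ℝ be symmetric, differentiable, positively homogeneous of degree m, and elliptic on Γ₊ (all first partial derivatives of both f and 𝔣 are positive on Γ₊). If f is concave and 𝔣 is convex on Γ₊, then for every λ ∈ Γ₊: m · ( 𝔣(λ) · Σᵢ ∂f/∂λᵢ(λ) · λᵢ² − f(λ) · Σᵢ ∂𝔣/∂λᵢ(λ) · λᵢ² ) ≤ 0. -/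
open Finset

/-!
By Euler's identity `∑ ∂ᵢf(λ) λᵢ = m f(λ)`. Comparing `f` at `λ` and at `λ` with two coordinates
swapped through the tangent-plane inequality, symmetry and concavity make `i ↦ ∂ᵢf(λ)` antivary
with `λ`; Chebyshev's sum inequality with weights `λᵢ` then gives
`(∑ λᵢ) (∑ ∂ᵢf λᵢ²) ≤ m f (∑ λᵢ²)`, and the reverse inequality for the convex `𝔣`.
Ellipticity makes `m f` and `m 𝔣` nonnegative, so the two inequalities can be cross-multiplied.
-/

section Chebyshev

variable {ι R : Type*} [Fintype ι] [CommRing R] [LinearOrder R] [IsStrictOrderedRing R]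
  {w a b : ι → R}

theorem Monovary.sum_mul_sum_le_sum_mul_sum_of_nonneg (hab : Monovary a b) (hw : 0 ≤ w) :
    (∑ i, w i * a i) * (∑ i, w i * b i) ≤ (∑ i, w i) * ∑ i, w i * a i * b i := by
  have key : 0 ≤ ∑ i, ∑ j, w i * w j * ((a j - a i) * (b j - b i)) :=
    sum_nonneg fun i _ ↦ sum_nonneg fun j _ ↦
      mul_nonneg (mul_nonneg (hw i) (hw j)) (hab.sub_mul_sub_nonneg i j)
  have expand : ∑ i, ∑ j, w i * w j * ((a j - a i) * (b j - b i)) =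
      2 * ((∑ i, w i) * ∑ i, w i * a i * b i - (∑ i, w i * a i) * (∑ i, w i * b i)) := by
    calc ∑ i, ∑ j, w i * w j * ((a j - a i) * (b j - b i))
        = ∑ i, ∑ j, (w i * (w j * a j * b j) + w j * (w i * a i * b i)
            - w i * a i * (w j * b j) - w j * a j * (w i * b i)) := by
          congr! 2; ring
      _ = _ := by
          simp only [sum_add_distrib, sum_sub_distrib, ← mul_sum, ← sum_mul]
          ring
  linarith

theorem Antivary.sum_mul_sum_le_sum_mul_sum_of_nonneg (hab : Antivary a b) (hw : 0 ≤ w) :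
    (∑ i, w i) * ∑ i, w i * a i * b i ≤ (∑ i, w i * a i) * (∑ i, w i * b i) := by
  have := hab.neg_left.sum_mul_sum_le_sum_mul_sum_of_nonneg hw
  simp only [Pi.neg_apply, mul_neg, neg_mul, sum_neg_distrib] at this
  linarith

end Chebyshev

theorem ConvexOn.fderiv_apply_sub_le {E : Type*} [NormedAddCommGroup E] [NormedSpace ℝ E]
    {s : Set E} {f : E → ℝ} {x y : E} (hf : ConvexOn ℝ s f) (hx : x ∈ s) (hy : y ∈ s)
    (hd : DifferentiableAt ℝ f x) : fderiv ℝ f x (y - x) ≤ f y - f x := by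
  let ℓ : ℝ →ᵃ[ℝ] E := AffineMap.lineMap x y
  have hℓ : HasDerivAt (f ∘ ℓ) (fderiv ℝ f x (y - x)) 0 := by
    have hfd : HasFDerivAt f (fderiv ℝ f x) (ℓ 0) := by simpa [ℓ] using hd.hasFDerivAt
    exact hfd.comp_hasDerivAt 0 AffineMap.hasDerivAt_lineMap
  have h := (hf.comp_affineMap ℓ).le_slope_of_hasDerivAt (x := 0) (y := 1)
    (by simpa [ℓ] using hx) (by simpa [ℓ] using hy) one_pos hℓ
  simpa [ℓ, slope] using h

theorem fderiv_apply_self_eq_mul_of_homogeneous {E : Type*} [NormedAddCommGroup E]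
    [NormedSpace ℝ E] {f : E → ℝ} {x : E} {m : ℝ} (hd : DifferentiableAt ℝ f x)
    (hhom : ∀ t : ℝ, 0 < t → f (t • x) = t ^ m * f x) :
    fderiv ℝ f x x = m * f x := by
  have hray : HasDerivAt (fun t : ℝ ↦ f (t • x)) (fderiv ℝ f x x) 1 := by
    have hfd : HasFDerivAt f (fderiv ℝ f x) ((1 : ℝ) • x) := by simpa using hd.hasFDerivAt
    have hline : HasDerivAt (fun t : ℝ ↦ t • x) x 1 := by
      simpa using (hasDerivAt_id (1 : ℝ)).smul_const x
    exact hfd.comp_hasDerivAt 1 hline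
  have hpow : HasDerivAt (fun t : ℝ ↦ t ^ m * f x) (m * f x) 1 := by
    simpa using (Real.hasDerivAt_rpow_const (x := 1) (p := m) (Or.inl one_ne_zero)).mul_const (f x)
  refine hray.unique (hpow.congr_of_eventuallyEq ?_)
  filter_upwards [eventually_gt_nhds one_pos] with t ht using hhom t ht

namespace ContinuousLinearMap

variable {ι : Type*} [DecidableEq ι] (L : (ι → ℝ) →L[ℝ] ℝ) (x : ι → ℝ)

theorem sum_apply_single_mul [Fintype ι] : ∑ i, L (Pi.single i 1) * x i = L x := by
  conv_rhs => rw [pi_eq_sum_univ' x]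
  simp [map_sum, mul_comm]

theorem apply_comp_swap_sub (i j : ι) :
    L (x ∘ Equiv.swap i j - x) = (x j - x i) * (L (Pi.single i 1) - L (Pi.single j 1)) := by
  have hv : x ∘ Equiv.swap i j - x = (x j - x i) • (Pi.single i 1 - Pi.single j 1) := by
    ext k
    simp only [Pi.sub_apply, Function.comp_apply, Pi.smul_apply, smul_eq_mul, Pi.single_apply,
      Equiv.swap_apply_def]
    split_ifs <;> simp_all
  rw [hv, map_smul, map_sub, smul_eq_mul]

end ContinuousLinearMap

section Symmetric

variable {ι : Type*} [Fintype ι] [DecidableEq ι] {s : Set (ι → ℝ)} {f : (ι → ℝ) → ℝ} {x : ι → ℝ}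

theorem ConvexOn.monovary_fderiv_single (hf : ConvexOn ℝ s f) (hx : x ∈ s)
    (hs : ∀ i j, x ∘ Equiv.swap i j ∈ s) (hsym : ∀ i j, f (x ∘ Equiv.swap i j) = f x)
    (hd : DifferentiableAt ℝ f x) : Monovary (fun i ↦ fderiv ℝ f x (Pi.single i 1)) x := by
  refine monovary_iff_forall_mul_nonneg.2 fun i j ↦ ?_
  have h := hf.fderiv_apply_sub_le hx (hs i j) hd
  rw [hsym, sub_self, ContinuousLinearMap.apply_comp_swap_sub] at h
  linarith

theorem ConcaveOn.antivary_fderiv_single (hf : ConcaveOn ℝ s f) (hx : x ∈ s)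
    (hs : ∀ i j, x ∘ Equiv.swap i j ∈ s) (hsym : ∀ i j, f (x ∘ Equiv.swap i j) = f x)
    (hd : DifferentiableAt ℝ f x) : Antivary (fun i ↦ fderiv ℝ f x (Pi.single i 1)) x := by
  have h := hf.neg.monovary_fderiv_single hx hs (by simpa using hsym) hd.neg
  simp only [fderiv_neg, neg_apply] at h
  exact monovary_neg_left.1 h

end Symmetric

theorem lemma23_first_ineq_concave_convex_general (n : ℕ) (m : ℝ)
    (f g : (Fin n → ℝ) → ℝ)
    (Γ : Set (Fin n → ℝ)) (hΓ : Γ = {x : Fin n → ℝ | ∀ i, 0 < x i})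
    (hsymf : ∀ (σ : Equiv.Perm (Fin n)), ∀ x ∈ Γ, f (x ∘ σ) = f x)
    (hsymg : ∀ (σ : Equiv.Perm (Fin n)), ∀ x ∈ Γ, g (x ∘ σ) = g x)
    (hdf : ∀ x ∈ Γ, DifferentiableAt ℝ f x)
    (hdg : ∀ x ∈ Γ, DifferentiableAt ℝ g x)
    (hhomf : ∀ t : ℝ, 0 < t → ∀ x ∈ Γ, f (t • x) = t ^ m * f x)
    (hhomg : ∀ t : ℝ, 0 < t → ∀ x ∈ Γ, g (t • x) = t ^ m * g x)
    (hellf : ∀ x ∈ Γ, ∀ i, 0 < fderiv ℝ f x (Pi.single i 1))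
    (hellg : ∀ x ∈ Γ, ∀ i, 0 < fderiv ℝ g x (Pi.single i 1))
    (hconcf : ConcaveOn ℝ Γ f) (hconvg : ConvexOn ℝ Γ g) :
    ∀ x ∈ Γ,
      m * (g x * ∑ i, fderiv ℝ f x (Pi.single i 1) * (x i) ^ 2
         - f x * ∑ i, fderiv ℝ g x (Pi.single i 1) * (x i) ^ 2) ≤ 0 := by
  intro x hx
  rcases isEmpty_or_nonempty (Fin n) with hn | hn
  · simp
  have hxpos : ∀ i, 0 < x i := by rw [hΓ] at hx; exact hx
  have hswap : ∀ i j, x ∘ Equiv.swap i j ∈ Γ := fun i j ↦ by rw [hΓ]; exact fun k ↦ hxpos _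
  set F := fun i ↦ fderiv ℝ f x (Pi.single i 1) with hF
  set G := fun i ↦ fderiv ℝ g x (Pi.single i 1) with hG
  have hEf : ∑ i, x i * F i = m * f x := by
    rw [← fderiv_apply_self_eq_mul_of_homogeneous (hdf x hx) (hhomf · · x hx),
      ← (fderiv ℝ f x).sum_apply_single_mul]
    simp only [hF, mul_comm]
  have hEg : ∑ i, x i * G i = m * g x := by
    rw [← fderiv_apply_self_eq_mul_of_homogeneous (hdg x hx) (hhomg · · x hx),
      ← (fderiv ℝ g x).sum_apply_single_mul]
    simp only [hG, mul_comm]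
  have hf := (hconcf.antivary_fderiv_single hx hswap (fun i j ↦ hsymf _ x hx)
    (hdf x hx)).sum_mul_sum_le_sum_mul_sum_of_nonneg (w := x) fun i ↦ (hxpos i).le
  have hg := (hconvg.monovary_fderiv_single hx hswap (fun i j ↦ hsymg _ x hx)
    (hdg x hx)).sum_mul_sum_le_sum_mul_sum_of_nonneg (w := x) fun i ↦ (hxpos i).le
  have hS : 0 < ∑ i, x i := sum_pos (fun i _ ↦ hxpos i) univ_nonempty
  have hmf : 0 ≤ m * f x := hEf ▸ sum_nonneg fun i _ ↦ (mul_pos (hxpos i) (hellf x hx i)).le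
  have hmg : 0 ≤ m * g x := hEg ▸ sum_nonneg fun i _ ↦ (mul_pos (hxpos i) (hellg x hx i)).le
  have hAf : ∑ i, x i * F i * x i = ∑ i, F i * x i ^ 2 := sum_congr rfl fun i _ ↦ by ring
  have hAg : ∑ i, x i * G i * x i = ∑ i, G i * x i ^ 2 := sum_congr rfl fun i _ ↦ by ring
  rw [hEf, hAf] at hf
  rw [hEg, hAg] at hg
  have key : (∑ i, x i) * (m * g x * ∑ i, F i * x i ^ 2)
      ≤ (∑ i, x i) * (m * f x * ∑ i, G i * x i ^ 2) := by
    linarith [mul_le_mul_of_nonneg_left hf hmg, mul_le_mul_of_nonneg_left hg hmf]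
  linarith [le_of_mul_le_mul_left key hS]

/-- first inequality of Lemma 2.3, concave/convex case. -/
theorem lemma23_first_ineq_concave_convex (n : ℕ) (m : ℝ) (hm : m ≠ 0)
    (f g : (Fin n → ℝ) → ℝ)
    (Γ : Set (Fin n → ℝ)) (hΓ : Γ = {x : Fin n → ℝ | ∀ i, 0 < x i})
    (hsymf : ∀ (σ : Equiv.Perm (Fin n)), ∀ x ∈ Γ, f (x ∘ σ) = f x)
    (hsymg : ∀ (σ : Equiv.Perm (Fin n)), ∀ x ∈ Γ, g (x ∘ σ) = g x)
    (hdf : ∀ x ∈ Γ, DifferentiableAt ℝ f x)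
    (hdg : ∀ x ∈ Γ, DifferentiableAt ℝ g x)
    (hhomf : ∀ t : ℝ, 0 < t → ∀ x ∈ Γ, f (t • x) = t ^ m * f x)
    (hhomg : ∀ t : ℝ, 0 < t → ∀ x ∈ Γ, g (t • x) = t ^ m * g x)
    (hellf : ∀ x ∈ Γ, ∀ i, 0 < fderiv ℝ f x (Pi.single i 1))
    (hellg : ∀ x ∈ Γ, ∀ i, 0 < fderiv ℝ g x (Pi.single i 1))
    (hconcf : ConcaveOn ℝ Γ f) (hconvg : ConvexOn ℝ Γ g) :
    ∀ x ∈ Γ,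
      m * (g x * ∑ i, fderiv ℝ f x (Pi.single i 1) * (x i) ^ 2
         - f x * ∑ i, fderiv ℝ g x (Pi.single i 1) * (x i) ^ 2) ≤ 0 :=
  lemma23_first_ineq_concave_convex_general n m f g Γ hΓ hsymf hsymg hdf hdg hhomf hhomg hellf hellg
    hconcf hconvg
end

section
/- Let m ∈ ℝ, m ≠ 0, and let f, 𝔣 : Γ₊ → ℝ be symmetric, differentiable, positively homogeneous of degree m, and elliptic on Γ₊ (all first partial derivatives of both f and 𝔣 are positive on Γ₊). If f is convex and 𝔣 is concave on Γ₊, then for every λ ∈ Γ₊: m · Σⱼ ( f(λ) · ∂𝔣/∂λⱼ(λ) − 𝔣(λ) · ∂f/∂λⱼ(λ) ) ≥ 0. -/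
/-!
Write `∂ᵢ` for the partial derivatives at `λ ∈ Γ₊`, `c` for the symmetrization of `λ` (the average
of its permutations, a constant vector `(s, …, s)` in `Γ₊`) and `Σ∂f := ∑ᵢ ∂ᵢ f(λ)`. The tangent
plane of `f` at `λ` lies below `f`; evaluated at `c` and combined with Euler's identity
`∇f(λ) · λ = m f(λ)` this gives `s Σ∂f ≤ f(c) + (m - 1) f(λ)`, and dually
`g(c) + (m - 1) g(λ) ≤ s Σ∂g`. Jensen's inequality over the permutations gives
`f(c) ≤ f(λ)` and `g(λ) ≤ g(c)`. Euler's identity and ellipticity make `m f` and `m g` positive on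
`Γ₊`, so `s m (f(λ) Σ∂g - g(λ) Σ∂f) ≥ m f(λ) g(c) - m g(λ) f(c)
= m g(c) (f(λ) - f(c)) + m f(c) (g(c) - g(λ)) ≥ 0`.
-/

open Finset Equiv

section FirstOrder

variable {E : Type*} [NormedAddCommGroup E] [NormedSpace ℝ E] {s : Set E} {f : E → ℝ} {x y : E}

theorem ConvexOn.add_fderiv_sub_le (hf : ConvexOn ℝ s f) (hx : x ∈ s) (hy : y ∈ s)
    (hd : DifferentiableAt ℝ f x) : f x + fderiv ℝ f x (y - x) ≤ f y := by
  let A : ℝ →ᵃ[ℝ] E := AffineMap.lineMap x y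
  have hA₀ : A 0 = x := AffineMap.lineMap_apply_zero x y
  have hA₁ : A 1 = y := AffineMap.lineMap_apply_one x y
  have hline : HasDerivAt (fun t : ℝ => f (A t)) (fderiv ℝ f x (y - x)) 0 := by
    have hA : HasDerivAt (fun t : ℝ => A t) (y - x) 0 := by
      simpa [A, AffineMap.lineMap_apply] using
        ((hasDerivAt_id (0 : ℝ)).smul_const (y - x)).add_const x
    have hfA : HasFDerivAt f (fderiv ℝ f x) (A 0) := hA₀ ▸ hd.hasFDerivAt
    exact hfA.comp_hasDerivAt 0 hA
  have hslope := (hf.comp_affineMap A).le_slope_of_hasDerivAt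
    (by simpa [hA₀] using hx) (by simpa [hA₁] using hy) one_pos hline
  rw [slope_def_field, Function.comp_apply, Function.comp_apply, hA₀, hA₁] at hslope
  linarith

theorem ConcaveOn.le_add_fderiv_sub (hf : ConcaveOn ℝ s f) (hx : x ∈ s) (hy : y ∈ s)
    (hd : DifferentiableAt ℝ f x) : f y ≤ f x + fderiv ℝ f x (y - x) := by
  have h := hf.neg.add_fderiv_sub_le hx hy hd.neg
  rw [fderiv_neg] at h
  simp only [Pi.neg_apply, FunLike.coe_neg] at h
  linarith

theorem fderiv_apply_self_of_homogeneous {m : ℝ} (hhom : ∀ t : ℝ, 0 < t → f (t • x) = t ^ m * f x)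
    (hd : DifferentiableAt ℝ f x) : fderiv ℝ f x x = m * f x := by
  have hray : HasDerivAt (fun t : ℝ => f (t • x)) (fderiv ℝ f x x) 1 := by
    have hsmul : HasDerivAt (fun t : ℝ => t • x) x 1 := by
      simpa using (hasDerivAt_id (1 : ℝ)).smul_const x
    have hf1 : HasFDerivAt f (fderiv ℝ f x) ((1 : ℝ) • x) := (one_smul ℝ x).symm ▸ hd.hasFDerivAt
    exact hf1.comp_hasDerivAt 1 hsmul
  have hpow : HasDerivAt (fun t : ℝ => t ^ m * f x) (m * f x) 1 := by
    simpa using (Real.hasDerivAt_rpow_const (x := 1) (p := m) (Or.inl one_ne_zero)).mul_const (f x)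
  have heq : (fun t : ℝ => f (t • x)) =ᶠ[nhds 1] fun t => t ^ m * f x := by
    filter_upwards [eventually_gt_nhds one_pos] with t ht using hhom t ht
  exact (hray.congr_of_eventuallyEq heq.symm).unique hpow

end FirstOrder

section Coordinates

variable {ι : Type*} [Fintype ι] [DecidableEq ι]

theorem ContinuousLinearMap.apply_eq_sum_mul_single (L : (ι → ℝ) →L[ℝ] ℝ) (v : ι → ℝ) :
    L v = ∑ i, v i * L (Pi.single i 1) := by
  conv_lhs => rw [← Finset.univ_sum_single v]
  simp only [map_sum]
  refine Finset.sum_congr rfl fun i _ => ?_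
  rw [← smul_eq_mul, ← map_smul, ← Pi.single_smul, smul_eq_mul, mul_one]

theorem ContinuousLinearMap.apply_const (L : (ι → ℝ) →L[ℝ] ℝ) (s : ℝ) :
    L (fun _ => s) = s * ∑ i, L (Pi.single i 1) := by
  rw [L.apply_eq_sum_mul_single, Finset.mul_sum]

theorem ContinuousLinearMap.apply_pos_of_single_pos [Nonempty ι] {L : (ι → ℝ) →L[ℝ] ℝ}
    (hL : ∀ i, 0 < L (Pi.single i 1)) {v : ι → ℝ} (hv : ∀ i, 0 < v i) : 0 < L v := by
  rw [L.apply_eq_sum_mul_single]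
  exact Finset.sum_pos (fun i _ => mul_pos (hv i) (hL i)) Finset.univ_nonempty

variable [Nonempty ι] {f : (ι → ℝ) → ℝ} {m : ℝ} {x : ι → ℝ}

theorem mul_pos_of_homogeneous_of_elliptic (hx : ∀ i, 0 < x i)
    (hhom : ∀ t : ℝ, 0 < t → f (t • x) = t ^ m * f x) (hd : DifferentiableAt ℝ f x)
    (hell : ∀ i, 0 < fderiv ℝ f x (Pi.single i 1)) : 0 < m * f x :=
  fderiv_apply_self_of_homogeneous hhom hd ▸ ContinuousLinearMap.apply_pos_of_single_pos hell hx

end Coordinates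

section Symmetrize

variable {ι : Type*} [Fintype ι] [DecidableEq ι]

noncomputable def symmetrize (x : ι → ℝ) : ι → ℝ :=
  ∑ σ : Perm ι, (Fintype.card (Perm ι) : ℝ)⁻¹ • (x ∘ σ)

theorem symmetrize_apply (x : ι → ℝ) (i : ι) :
    symmetrize x i = (Fintype.card (Perm ι) : ℝ)⁻¹ * ∑ σ : Perm ι, x (σ i) := by
  simp [symmetrize, Finset.sum_apply, Finset.mul_sum]

theorem symmetrize_apply_eq (x : ι → ℝ) (i j : ι) : symmetrize x i = symmetrize x j := by
  rw [symmetrize_apply, symmetrize_apply, ← Equiv.sum_comp (Equiv.mulRight (swap i j))]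
  simp

omit [DecidableEq ι] in
theorem sum_card_inv_eq_one [Nonempty ι] : ∑ _i : ι, (Fintype.card ι : ℝ)⁻¹ = 1 := by
  simp [Finset.card_univ]

variable {s : Set (ι → ℝ)} {f : (ι → ℝ) → ℝ} {x : ι → ℝ}

theorem Convex.symmetrize_mem (hs : Convex ℝ s) (hperm : ∀ σ : Perm ι, ∀ x ∈ s, x ∘ σ ∈ s)
    (hx : x ∈ s) : symmetrize x ∈ s :=
  hs.sum_mem (fun _ _ => by positivity) sum_card_inv_eq_one fun σ _ => hperm σ x hx

theorem ConvexOn.map_symmetrize_le (hf : ConvexOn ℝ s f)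
    (hperm : ∀ σ : Perm ι, ∀ x ∈ s, x ∘ σ ∈ s)
    (hsym : ∀ σ : Perm ι, ∀ x ∈ s, f (x ∘ σ) = f x) (hx : x ∈ s) : f (symmetrize x) ≤ f x := by
  have h := hf.map_sum_le (t := univ) (fun _ _ => by positivity) sum_card_inv_eq_one
    fun σ _ => hperm σ x hx
  simpa only [symmetrize, smul_eq_mul, hsym _ x hx, ← Finset.sum_mul, sum_card_inv_eq_one,
    one_mul] using h

theorem ConcaveOn.le_map_symmetrize (hf : ConcaveOn ℝ s f)
    (hperm : ∀ σ : Perm ι, ∀ x ∈ s, x ∘ σ ∈ s)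
    (hsym : ∀ σ : Perm ι, ∀ x ∈ s, f (x ∘ σ) = f x) (hx : x ∈ s) : f x ≤ f (symmetrize x) := by
  have h := hf.le_map_sum (t := univ) (fun _ _ => by positivity) sum_card_inv_eq_one
    fun σ _ => hperm σ x hx
  simpa only [symmetrize, smul_eq_mul, hsym _ x hx, ← Finset.sum_mul, sum_card_inv_eq_one,
    one_mul] using h

end Symmetrize

section Euler

variable {ι : Type*} [Fintype ι] [DecidableEq ι] {s : Set (ι → ℝ)} {f : (ι → ℝ) → ℝ}
  {m t : ℝ} {x : ι → ℝ}

theorem ConvexOn.mul_sum_fderiv_single_le (hf : ConvexOn ℝ s f) (hx : x ∈ s)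
    (ht : (fun _ => t) ∈ s) (hhom : ∀ r : ℝ, 0 < r → f (r • x) = r ^ m * f x)
    (hd : DifferentiableAt ℝ f x) :
    t * ∑ i, fderiv ℝ f x (Pi.single i 1) ≤ f (fun _ => t) + (m - 1) * f x := by
  have h := hf.add_fderiv_sub_le hx ht hd
  rw [map_sub, ContinuousLinearMap.apply_const, fderiv_apply_self_of_homogeneous hhom hd] at h
  linarith

theorem ConcaveOn.le_mul_sum_fderiv_single (hf : ConcaveOn ℝ s f) (hx : x ∈ s)
    (ht : (fun _ => t) ∈ s) (hhom : ∀ r : ℝ, 0 < r → f (r • x) = r ^ m * f x)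
    (hd : DifferentiableAt ℝ f x) :
    f (fun _ => t) + (m - 1) * f x ≤ t * ∑ i, fderiv ℝ f x (Pi.single i 1) := by
  have h := hf.le_add_fderiv_sub hx ht hd
  rw [map_sub, ContinuousLinearMap.apply_const, fderiv_apply_self_of_homogeneous hhom hd] at h
  linarith

end Euler

theorem convex_positiveOrthant (ι : Type*) : Convex ℝ {x : ι → ℝ | ∀ i, 0 < x i} := by
  simpa [Set.pi, Set.mem_Ioi] using convex_pi (s := Set.univ) fun _ _ => convex_Ioi (0 : ℝ)

theorem lemma23_second_ineq_convex_concave_general (n : ℕ) (m : ℝ)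
    (f g : (Fin n → ℝ) → ℝ)
    (Γ : Set (Fin n → ℝ)) (hΓ : Γ = {x : Fin n → ℝ | ∀ i, 0 < x i})
    (hsymf : ∀ (σ : Equiv.Perm (Fin n)), ∀ x ∈ Γ, f (x ∘ σ) = f x)
    (hsymg : ∀ (σ : Equiv.Perm (Fin n)), ∀ x ∈ Γ, g (x ∘ σ) = g x)
    (hdf : ∀ x ∈ Γ, DifferentiableAt ℝ f x)
    (hdg : ∀ x ∈ Γ, DifferentiableAt ℝ g x)
    (hhomf : ∀ t : ℝ, 0 < t → ∀ x ∈ Γ, f (t • x) = t ^ m * f x)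
    (hhomg : ∀ t : ℝ, 0 < t → ∀ x ∈ Γ, g (t • x) = t ^ m * g x)
    (hellf : ∀ x ∈ Γ, ∀ i, 0 < fderiv ℝ f x (Pi.single i 1))
    (hellg : ∀ x ∈ Γ, ∀ i, 0 < fderiv ℝ g x (Pi.single i 1))
    (hconvf : ConvexOn ℝ Γ f) (hconcg : ConcaveOn ℝ Γ g) :
    ∀ x ∈ Γ,
      0 ≤ m * ∑ j, (f x * fderiv ℝ g x (Pi.single j 1)
                  - g x * fderiv ℝ f x (Pi.single j 1)) := by
  intro a ha
  rcases isEmpty_or_nonempty (Fin n) with _ | _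
  · simp
  have i₀ : Fin n := Classical.arbitrary _
  have hΓpos : ∀ x ∈ Γ, ∀ i, 0 < x i := by rw [hΓ]; exact fun x hx => hx
  have hperm : ∀ σ : Perm (Fin n), ∀ x ∈ Γ, x ∘ σ ∈ Γ := by
    rw [hΓ]; exact fun σ x hx i => hx (σ i)
  set s := symmetrize a i₀
  have hc : symmetrize a = fun _ => s := funext fun i => symmetrize_apply_eq a i i₀
  have hcΓ : (fun _ => s) ∈ Γ :=
    hc ▸ (hΓ ▸ convex_positiveOrthant (Fin n)).symmetrize_mem hperm ha
  have hfa := mul_pos_of_homogeneous_of_elliptic (hΓpos a ha) (fun t ht => hhomf t ht a ha)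
    (hdf a ha) (hellf a ha)
  have hga := mul_pos_of_homogeneous_of_elliptic (hΓpos a ha) (fun t ht => hhomg t ht a ha)
    (hdg a ha) (hellg a ha)
  have hfc := mul_pos_of_homogeneous_of_elliptic (hΓpos _ hcΓ) (fun t ht => hhomf t ht _ hcΓ)
    (hdf _ hcΓ) (hellf _ hcΓ)
  have hgc := mul_pos_of_homogeneous_of_elliptic (hΓpos _ hcΓ) (fun t ht => hhomg t ht _ hcΓ)
    (hdg _ hcΓ) (hellg _ hcΓ)
  have hSf := hconvf.mul_sum_fderiv_single_le ha hcΓ (fun t ht => hhomf t ht a ha) (hdf a ha)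
  have hSg := hconcg.le_mul_sum_fderiv_single ha hcΓ (fun t ht => hhomg t ht a ha) (hdg a ha)
  have hfac : f (fun _ => s) ≤ f a := hc ▸ hconvf.map_symmetrize_le hperm hsymf ha
  have hgac : g a ≤ g (fun _ => s) := hc ▸ hconcg.le_map_symmetrize hperm hsymg ha
  rw [Finset.sum_sub_distrib, ← Finset.mul_sum, ← Finset.mul_sum]
  refine nonneg_of_mul_nonneg_right ?_ (hΓpos _ hcΓ i₀)
  nlinarith [mul_le_mul_of_nonneg_left hSg hfa.le, mul_le_mul_of_nonneg_left hSf hga.le,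
    mul_nonneg hgc.le (sub_nonneg.2 hfac), mul_nonneg hfc.le (sub_nonneg.2 hgac)]

/-- second inequality of Lemma 2.3, convex/concave case. -/
theorem lemma23_second_ineq_convex_concave (n : ℕ) (m : ℝ) (hm : m ≠ 0)
    (f g : (Fin n → ℝ) → ℝ)
    (Γ : Set (Fin n → ℝ)) (hΓ : Γ = {x : Fin n → ℝ | ∀ i, 0 < x i})
    (hsymf : ∀ (σ : Equiv.Perm (Fin n)), ∀ x ∈ Γ, f (x ∘ σ) = f x)
    (hsymg : ∀ (σ : Equiv.Perm (Fin n)), ∀ x ∈ Γ, g (x ∘ σ) = g x)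
    (hdf : ∀ x ∈ Γ, DifferentiableAt ℝ f x)
    (hdg : ∀ x ∈ Γ, DifferentiableAt ℝ g x)
    (hhomf : ∀ t : ℝ, 0 < t → ∀ x ∈ Γ, f (t • x) = t ^ m * f x)
    (hhomg : ∀ t : ℝ, 0 < t → ∀ x ∈ Γ, g (t • x) = t ^ m * g x)
    (hellf : ∀ x ∈ Γ, ∀ i, 0 < fderiv ℝ f x (Pi.single i 1))
    (hellg : ∀ x ∈ Γ, ∀ i, 0 < fderiv ℝ g x (Pi.single i 1))
    (hconvf : ConvexOn ℝ Γ f) (hconcg : ConcaveOn ℝ Γ g) :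
    ∀ x ∈ Γ,
      0 ≤ m * ∑ j, (f x * fderiv ℝ g x (Pi.single j 1)
                  - g x * fderiv ℝ f x (Pi.single j 1)) :=
  lemma23_second_ineq_convex_concave_general n m f g Γ hΓ hsymf hsymg hdf hdg hhomf hhomg hellf
    hellg hconvf hconcg
end
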